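/- Let i = 2m ≥ 0 be even and let g be an isometry of the hermitian B-lattice (L,h). Then for every w ∈ W_i one has gw − w ∈ X_i ∩ Z_i; that is, g induces the identity on W_i/(X_i ∩ Z_i). -/

import Mathlib

/-- `A_i = {x ∈ L : h(x,L) ⊆ π^i B}`. -/
def AiSet {B L : Type*} [CommRing B] [AddCommGroup L] [Module B L]
    (π : B) (h : L → L → B) (i : ℕ) : Set L :=
  {x | ∀ w : L, π ^ i ∣ h x w}

/-- `B_i = {x ∈ A_i : h(x,x) ∈ 2^{m+1} A}` where `m = ⌈i/2⌉`. -/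
def BiSet (A : Type*) {B L : Type*} [CommRing A] [CommRing B] [Algebra A B]
    [AddCommGroup L] [Module B L] (π : B) (h : L → L → B) (i : ℕ) : Set L :=
  {x | x ∈ AiSet π h i ∧ ∃ a : A, h x x = algebraMap A B (2 ^ ((i + 1) / 2 + 1) * a)}

/-- `X_i = {x ∈ A_i : h(x,A_i) ⊆ π^{i+1} B}`. -/
def XiSet {B L : Type*} [CommRing B] [AddCommGroup L] [Module B L]
    (π : B) (h : L → L → B) (i : ℕ) : Set L :=
  {x | x ∈ AiSet π h i ∧ ∀ w ∈ AiSet π h i, π ^ (i + 1) ∣ h x w}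

/-- `Y_i = {x ∈ B_i : h(x,B_i) ⊆ π^{i+1} B}`. -/
def YiSet (A : Type*) {B L : Type*} [CommRing A] [CommRing B] [Algebra A B]
    [AddCommGroup L] [Module B L] (π : B) (h : L → L → B) (i : ℕ) : Set L :=
  {x | x ∈ BiSet A π h i ∧ ∀ w ∈ BiSet A π h i, π ^ (i + 1) ∣ h x w}

/-- `Z_i = {x ∈ Y_i : h(x,x) ∈ 2^{m+2} A}` (used for `i = 2m` even). -/
def ZiSet (A : Type*) {B L : Type*} [CommRing A] [CommRing B] [Algebra A B]
    [AddCommGroup L] [Module B L] (π : B) (h : L → L → B) (i : ℕ) : Set L :=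
  {x | x ∈ YiSet A π h i ∧ ∃ a : A, h x x = algebraMap A B (2 ^ ((i + 1) / 2 + 2) * a)}

/-- `S_i = {w ∈ A_i : (ξ^{-m} h(v,w))² - ξ^{-m} h(v,v) ∈ πB for all v ∈ A_i}` for `i = 2m`
even, expressed integrally after multiplying through by the unit multiple `ξ^{2m}` of
`π^{4m}`: namely `h(v,w)² - ξ^m h(v,v) ∈ π^{4m+1} B`, where `ξ = πσ(π) = -π²`. -/
def SiSet {B L : Type*} [CommRing B] [AddCommGroup L] [Module B L]
    (π : B) (h : L → L → B) (i : ℕ) : Set L :=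
  {w | w ∈ AiSet π h i ∧ ∀ v ∈ AiSet π h i,
    π ^ (4 * ((i + 1) / 2) + 1) ∣ ((h v w) ^ 2 - (-(π ^ 2)) ^ ((i + 1) / 2) * h v v)}

/-- `W_i = X_i + ⟨S_i⟩` for even `i`, and `W_i = X_i` for odd `i`. -/
def WiSet {B L : Type*} [CommRing B] [AddCommGroup L] [Module B L]
    (π : B) (h : L → L → B) (i : ℕ) : Set L :=
  if Even i then (Submodule.span B (XiSet π h i ∪ SiSet π h i) : Set L)
  else XiSet π h i


/-! Since `π² = 2δ`, an element `c ∈ π^{2m+1}B` has trace `c + σc ∈ 2^{m+2}A`, and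
`π` is "radical": `π ∣ d²` forces `π ∣ d`, because `B/π = A/2`.  The first fact makes the set of
`u ∈ X_{2m}` with `h(u,u) ∈ 2^{m+2}A` a submodule, which is `X_{2m} ∩ Z_{2m}`, and puts `gw - w` in
it as soon as `gw - w ∈ X_{2m}`, via `h(gw - w, gw - w) = -Tr h(w, gw - w)`.  The second shows that
two elements `w, w'` of `S_{2m}` differ by an element of `X_{2m}`: `h(v,w)² ≡ h(v,w')²` modulo
`π^{4m+1}` and `2 ∈ π²B` give `(h(v,w) - h(v,w'))² ∈ π^{4m+1}B`.  As `g` preserves `X_{2m}` and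
`S_{2m}`, this covers the generators of `W_{2m}`. -/

section Divisibility

variable {B : Type*} [CommRing B]

theorem pow_dvd_map_of_pow_dvd {F : Type*} [FunLike F B B] [RingHomClass F B B] {σ : F} {π : B}
    (hσπ : σ π = -π) {k : ℕ} {c : B} (hc : π ^ k ∣ c) : π ^ k ∣ σ c := by
  obtain ⟨e, rfl⟩ := hc
  exact ⟨(-1) ^ k * σ e, by rw [map_mul, map_pow, hσπ, neg_pow]; ring⟩

variable [IsDomain B] {π : B}

theorem pow_succ_dvd_of_dvd_sq (hπ : π ≠ 0) (hrad : ∀ d : B, π ∣ d ^ 2 → π ∣ d) {k : ℕ} {c : B}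
    (hc : π ^ k ∣ c) (hc2 : π ^ (2 * k + 1) ∣ c ^ 2) : π ^ (k + 1) ∣ c := by
  obtain ⟨d, rfl⟩ := hc
  obtain ⟨e, he⟩ := hc2
  have hd : d ^ 2 = π * e := by
    apply mul_left_cancel₀ (pow_ne_zero (2 * k) hπ)
    linear_combination he
  obtain ⟨f, rfl⟩ := hrad d ⟨e, hd⟩
  exact ⟨f, by ring⟩

theorem pow_succ_dvd_sub_of_dvd_sq_sub_sq (hπ : π ≠ 0) (hrad : ∀ d : B, π ∣ d ^ 2 → π ∣ d)
    (h2 : π ^ 2 ∣ 2) {k : ℕ} {a b : B} (ha : π ^ k ∣ a) (hb : π ^ k ∣ b)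
    (hab : π ^ (2 * k + 1) ∣ a ^ 2 - b ^ 2) : π ^ (k + 1) ∣ a - b := by
  have hsub : π ^ k ∣ a - b := dvd_sub ha hb
  refine pow_succ_dvd_of_dvd_sq hπ hrad hsub ?_
  have hcross : π ^ (2 * k + 1) ∣ 2 * b * (a - b) := by
    obtain ⟨t, ht⟩ := h2
    obtain ⟨b', rfl⟩ := hb
    obtain ⟨c', hc'⟩ := hsub
    exact ⟨π * t * b' * c', by rw [ht, hc']; ring⟩
  have hsq : (a - b) ^ 2 = (a ^ 2 - b ^ 2) - 2 * b * (a - b) := by ring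
  rw [hsq]
  exact dvd_sub hab hcross

end Divisibility

theorem sq_dvd_algebraMap {A B : Type*} [CommRing A] [CommRing B] [Algebra A B] {π : B}
    {p δ : A} (hδ : IsUnit δ) (hπ : π ^ 2 = algebraMap A B (p * δ)) : π ^ 2 ∣ algebraMap A B p := by
  obtain ⟨u, rfl⟩ := hδ
  refine ⟨algebraMap A B ↑u⁻¹, ?_⟩
  rw [hπ, ← map_mul, mul_assoc, Units.mul_inv, mul_one]

def IsBasisOneAnd (A : Type*) {B : Type*} [CommRing A] [CommRing B] [Algebra A B] (π : B) :
    Prop :=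
  ∀ b : B, ∃! p : A × A, b = algebraMap A B p.1 + algebraMap A B p.2 * π

namespace IsBasisOneAnd

variable {A B : Type*} [CommRing A] [CommRing B] [Algebra A B] {π : B}

theorem exists_eq (hb : IsBasisOneAnd A π) (b : B) :
    ∃ α β : A, b = algebraMap A B α + algebraMap A B β * π :=
  let ⟨p, hp, _⟩ := hb b
  ⟨p.1, p.2, hp⟩

theorem eq_and_eq (hb : IsBasisOneAnd A π) {α β α' β' : A}
    (h : algebraMap A B α + algebraMap A B β * π = algebraMap A B α' + algebraMap A B β' * π) :
    α = α' ∧ β = β' := by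
  obtain ⟨p, -, hp⟩ := hb (algebraMap A B α + algebraMap A B β * π)
  exact Prod.ext_iff.mp ((hp (α, β) rfl).trans (hp (α', β') h).symm)

theorem ne_zero [Nontrivial A] (hb : IsBasisOneAnd A π) : π ≠ 0 := by
  intro hπ
  have h := hb.eq_and_eq (α := 0) (β := 1) (α' := 0) (β' := 0) (by simp [hπ])
  exact one_ne_zero h.2

theorem dvd_of_dvd_sq (hb : IsBasisOneAnd A π) {p δ : A} (hp : (Ideal.span {p}).IsPrime)
    (hδ : IsUnit δ) (hπ : π ^ 2 = algebraMap A B (p * δ)) {d : B} (hd : π ∣ d ^ 2) : π ∣ d := by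
  obtain ⟨α, β, rfl⟩ := hb.exists_eq d
  obtain ⟨e, he⟩ := hd
  obtain ⟨γ, ε, rfl⟩ := hb.exists_eq e
  have hcoord : algebraMap A B (α * α + p * δ * (β * β)) + algebraMap A B (2 * (α * β)) * π =
      algebraMap A B (p * δ * ε) + algebraMap A B γ * π := by
    simp only [map_add, map_mul, map_ofNat] at hπ ⊢
    linear_combination he - (algebraMap A B β ^ 2 - algebraMap A B ε) * hπ
  have hα : p ∣ α := by
    rw [← Ideal.mem_span_singleton]
    refine hp.mem_of_pow_mem 2 (Ideal.mem_span_singleton.mpr ⟨δ * ε - δ * (β * β), ?_⟩)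
    linear_combination (hb.eq_and_eq hcoord).1
  obtain ⟨α₁, rfl⟩ := hα
  obtain ⟨t, ht⟩ := sq_dvd_algebraMap hδ hπ
  exact ⟨π * t * algebraMap A B α₁ + algebraMap A B β, by rw [map_mul, ht]; ring⟩

variable {F : Type*} [FunLike F B B] [AlgHomClass F A B B] {σ : F}

theorem map_eq_sub (hσπ : σ π = -π) (α β : A) :
    σ (algebraMap A B α + algebraMap A B β * π) = algebraMap A B α - algebraMap A B β * π := by
  rw [map_add, map_mul, AlgHomClass.commutes, AlgHomClass.commutes, hσπ]
  ring

theorem exists_map_mul_self_eq (hb : IsBasisOneAnd A π) (hσπ : σ π = -π) {t : A}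
    (hπ : π ^ 2 = algebraMap A B t) (b : B) : ∃ a : A, σ b * b = algebraMap A B a := by
  obtain ⟨α, β, rfl⟩ := hb.exists_eq b
  refine ⟨α * α - t * (β * β), ?_⟩
  rw [map_eq_sub hσπ]
  simp only [map_sub, map_mul]
  linear_combination (-(algebraMap A B β) ^ 2) * hπ

theorem exists_add_map_eq (hb : IsBasisOneAnd A π) (hσπ : σ π = -π) {δ : A}
    (hπ : π ^ 2 = algebraMap A B (2 * δ)) {m : ℕ} {c : B} (hc : π ^ (2 * m + 1) ∣ c) :
    ∃ a : A, c + σ c = algebraMap A B (2 ^ (m + 2) * a) := by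
  obtain ⟨e, rfl⟩ := hc
  obtain ⟨α, β, rfl⟩ := hb.exists_eq e
  refine ⟨δ ^ (m + 1) * β, ?_⟩
  -- `c + σc = π^{2m+1}(e - σe) = 2β π^{2m+2}`
  have hpow : π ^ (2 * m + 1) * π = algebraMap A B (2 * δ) ^ (m + 1) := by
    rw [← hπ, ← pow_mul, ← pow_succ]
    ring_nf
  rw [map_mul, map_eq_sub hσπ, map_pow, hσπ, (odd_two_mul_add_one m).neg_pow]
  simp only [map_mul, map_pow, map_ofNat] at hpow ⊢
  linear_combination (2 * algebraMap A B β) * hpow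

end IsBasisOneAnd

structure IsHermitianForm {B L F : Type*} [CommRing B] [AddCommGroup L] [Module B L]
    [FunLike F B B] (σ : F) (h : L → L → B) : Prop where
  add_left : ∀ x y z : L, h (x + y) z = h x z + h y z
  smul_smul : ∀ (a b : B) (v w : L), h (a • v) (b • w) = σ a * b * h v w
  symm : ∀ v w : L, h w v = σ (h v w)

namespace IsHermitianForm

variable {B L F : Type*} [CommRing B] [AddCommGroup L] [Module B L] [FunLike F B B] {σ : F}
  {h : L → L → B}

theorem zero_left (hh : IsHermitianForm σ h) (v : L) : h 0 v = 0 := by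
  simpa using hh.add_left 0 0 v

theorem sub_left (hh : IsHermitianForm σ h) (x y v : L) : h (x - y) v = h x v - h y v := by
  rw [eq_sub_iff_add_eq, ← hh.add_left, sub_add_cancel]

theorem smul_left (hh : IsHermitianForm σ h) (b : B) (v w : L) : h (b • v) w = σ b * h v w := by
  simpa using hh.smul_smul b 1 v w

variable [RingHomClass F B B]

theorem add_right (hh : IsHermitianForm σ h) (v x y : L) : h v (x + y) = h v x + h v y := by
  rw [hh.symm, hh.add_left, map_add, ← hh.symm, ← hh.symm]

theorem sub_right (hh : IsHermitianForm σ h) (v x y : L) : h v (x - y) = h v x - h v y := by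
  rw [hh.symm, hh.sub_left, map_sub, ← hh.symm, ← hh.symm]

theorem add_self (hh : IsHermitianForm σ h) (x y : L) :
    h (x + y) (x + y) = h x x + h y y + (h x y + σ (h x y)) := by
  rw [hh.add_left, hh.add_right, hh.add_right, ← hh.symm]
  ring

theorem dvd_right_of_mem_AiSet (hh : IsHermitianForm σ h) {π : B} (hσπ : σ π = -π) {i : ℕ}
    {x : L} (hx : x ∈ AiSet π h i) (v : L) : π ^ i ∣ h v x := by
  rw [hh.symm]
  exact pow_dvd_map_of_pow_dvd hσπ (hx v)

end IsHermitianForm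

section Isometry

variable {B L : Type*} [CommRing B] [AddCommGroup L] [Module B L] {h : L → L → B}
  {g : L ≃ₗ[B] L}

theorem isometry_symm (hg : ∀ x y : L, h (g x) (g y) = h x y) (x y : L) :
    h (g.symm x) (g.symm y) = h x y := by
  rw [← hg (g.symm x), g.apply_symm_apply, g.apply_symm_apply]

theorem isometry_apply_left (hg : ∀ x y : L, h (g x) (g y) = h x y) (x v : L) :
    h (g x) v = h x (g.symm v) := by
  rw [← hg x (g.symm v), g.apply_symm_apply]

variable {π : B} {i : ℕ}

theorem apply_mem_AiSet (hg : ∀ x y : L, h (g x) (g y) = h x y) {x : L}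
    (hx : x ∈ AiSet π h i) : g x ∈ AiSet π h i := fun v => by
  rw [isometry_apply_left hg]
  exact hx _

theorem apply_mem_XiSet (hg : ∀ x y : L, h (g x) (g y) = h x y) {x : L}
    (hx : x ∈ XiSet π h i) : g x ∈ XiSet π h i := by
  refine ⟨apply_mem_AiSet hg hx.1, fun w hw => ?_⟩
  rw [isometry_apply_left hg]
  exact hx.2 _ (apply_mem_AiSet (isometry_symm hg) hw)

theorem apply_mem_SiSet (hg : ∀ x y : L, h (g x) (g y) = h x y) {w : L}
    (hw : w ∈ SiSet π h i) : g w ∈ SiSet π h i := by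
  refine ⟨apply_mem_AiSet hg hw.1, fun v hv => ?_⟩
  have hv' := hw.2 _ (apply_mem_AiSet (isometry_symm hg) hv)
  rwa [isometry_apply_left (isometry_symm hg), g.symm_symm, isometry_symm hg] at hv'

end Isometry

section Lattice

variable {A B L : Type*} [CommRing A] [CommRing B] [Algebra A B] [AddCommGroup L] [Module B L]
  {π : B} {h : L → L → B} {m : ℕ}

theorem sub_mem_XiSet {F : Type*} [FunLike F B B] {σ : F} (hh : IsHermitianForm σ h) {i : ℕ}
    {x y : L} (hx : x ∈ XiSet π h i) (hy : y ∈ XiSet π h i) : x - y ∈ XiSet π h i := by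
  refine ⟨fun v => ?_, fun v hv => ?_⟩ <;> rw [hh.sub_left]
  · exact dvd_sub (hx.1 v) (hy.1 v)
  · exact dvd_sub (hx.2 v hv) (hy.2 v hv)

theorem mem_XiSet_inter_ZiSet_iff {u : L} :
    u ∈ XiSet π h (2 * m) ∩ ZiSet A π h (2 * m) ↔
      u ∈ XiSet π h (2 * m) ∧ ∃ a : A, h u u = algebraMap A B (2 ^ (m + 2) * a) := by
  have hm : (2 * m + 1) / 2 = m := by omega
  rw [ZiSet, Set.mem_inter_iff, Set.mem_ofPred_eq, hm]
  refine ⟨fun ⟨hX, _, hZ⟩ => ⟨hX, hZ⟩, fun ⟨hX, a, ha⟩ => ⟨hX, ?_, a, ha⟩⟩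
  have hB : u ∈ BiSet A π h (2 * m) := ⟨hX.1, 2 * a, by rw [ha, hm]; ring_nf⟩
  exact ⟨hB, fun w hw => hX.2 w hw.1⟩

variable {F : Type*} [FunLike F B B] {σ : F}

theorem zero_mem_XiSet_inter_ZiSet (hh : IsHermitianForm σ h) :
    (0 : L) ∈ XiSet π h (2 * m) ∩ ZiSet A π h (2 * m) := by
  refine mem_XiSet_inter_ZiSet_iff.mpr ⟨⟨fun v => ?_, fun v _ => ?_⟩, 0, ?_⟩ <;>
    simp [hh.zero_left]

theorem add_mem_XiSet_inter_ZiSet [AlgHomClass F A B B] (hh : IsHermitianForm σ h)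
    (hb : IsBasisOneAnd A π) (hσπ : σ π = -π) {δ : A} (hπ : π ^ 2 = algebraMap A B (2 * δ))
    {x y : L} (hx : x ∈ XiSet π h (2 * m) ∩ ZiSet A π h (2 * m))
    (hy : y ∈ XiSet π h (2 * m) ∩ ZiSet A π h (2 * m)) :
    x + y ∈ XiSet π h (2 * m) ∩ ZiSet A π h (2 * m) := by
  obtain ⟨hxX, a, hxx⟩ := mem_XiSet_inter_ZiSet_iff.mp hx
  obtain ⟨hyX, b, hyy⟩ := mem_XiSet_inter_ZiSet_iff.mp hy
  obtain ⟨t, ht⟩ := hb.exists_add_map_eq hσπ hπ (hxX.2 y hyX.1)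
  refine mem_XiSet_inter_ZiSet_iff.mpr ⟨⟨fun v => ?_, fun v hv => ?_⟩, a + b + t, ?_⟩
  · rw [hh.add_left]
    exact dvd_add (hxX.1 v) (hyX.1 v)
  · rw [hh.add_left]
    exact dvd_add (hxX.2 v hv) (hyX.2 v hv)
  · rw [hh.add_self, hxx, hyy, ht, ← map_add, ← map_add]
    ring_nf

theorem smul_mem_XiSet_inter_ZiSet [AlgHomClass F A B B] (hh : IsHermitianForm σ h)
    (hb : IsBasisOneAnd A π) (hσπ : σ π = -π) {t : A} (hπ : π ^ 2 = algebraMap A B t) (c : B)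
    {x : L} (hx : x ∈ XiSet π h (2 * m) ∩ ZiSet A π h (2 * m)) :
    c • x ∈ XiSet π h (2 * m) ∩ ZiSet A π h (2 * m) := by
  obtain ⟨hxX, a, ha⟩ := mem_XiSet_inter_ZiSet_iff.mp hx
  obtain ⟨n, hn⟩ := hb.exists_map_mul_self_eq hσπ hπ c
  refine mem_XiSet_inter_ZiSet_iff.mpr ⟨⟨fun v => ?_, fun v hv => ?_⟩, n * a, ?_⟩
  · rw [hh.smul_left]
    exact (hxX.1 v).mul_left _
  · rw [hh.smul_left]
    exact (hxX.2 v hv).mul_left _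
  · rw [hh.smul_smul, hn, ha, ← map_mul]
    ring_nf

theorem sub_mem_XiSet_of_mem_SiSet [RingHomClass F B B] [IsDomain B] (hh : IsHermitianForm σ h)
    (hσπ : σ π = -π) (hπ0 : π ≠ 0) (hrad : ∀ d : B, π ∣ d ^ 2 → π ∣ d) (h2 : π ^ 2 ∣ 2) {w w' : L}
    (hw : w ∈ SiSet π h (2 * m)) (hw' : w' ∈ SiSet π h (2 * m)) : w - w' ∈ XiSet π h (2 * m) := by
  have hm : (2 * m + 1) / 2 = m := by omega
  refine ⟨fun v => ?_, fun v hv => ?_⟩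
  · rw [hh.sub_left]
    exact dvd_sub (hw.1 v) (hw'.1 v)
  have hsq : π ^ (2 * (2 * m) + 1) ∣ h v w ^ 2 - h v w' ^ 2 := by
    have hdiff := dvd_sub (hw.2 v hv) (hw'.2 v hv)
    rw [hm, sub_sub_sub_cancel_right] at hdiff
    rwa [← mul_assoc]
  rw [hh.symm, hh.sub_right]
  exact pow_dvd_map_of_pow_dvd hσπ <| pow_succ_dvd_sub_of_dvd_sq_sub_sq hπ0 hrad h2
    (hh.dvd_right_of_mem_AiSet hσπ hw.1 v) (hh.dvd_right_of_mem_AiSet hσπ hw'.1 v) hsq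

theorem apply_sub_mem_XiSet_inter_ZiSet [AlgHomClass F A B B] (hh : IsHermitianForm σ h)
    (hb : IsBasisOneAnd A π) (hσπ : σ π = -π) {δ : A} (hπ : π ^ 2 = algebraMap A B (2 * δ))
    {g : L ≃ₗ[B] L} (hg : ∀ x y : L, h (g x) (g y) = h x y) {w : L} (hw : w ∈ AiSet π h (2 * m))
    (hgw : g w - w ∈ XiSet π h (2 * m)) : g w - w ∈ XiSet π h (2 * m) ∩ ZiSet A π h (2 * m) := by
  have hc : π ^ (2 * m + 1) ∣ h w (g w - w) := by
    rw [hh.symm]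
    exact pow_dvd_map_of_pow_dvd hσπ (hgw.2 w hw)
  obtain ⟨a, ha⟩ := hb.exists_add_map_eq hσπ hπ hc
  have hself : h (g w - w) (g w - w) = -(h w (g w - w) + σ (h w (g w - w))) := by
    simp only [hh.sub_left, hh.sub_right, hg, map_sub, ← hh.symm]
    ring
  refine mem_XiSet_inter_ZiSet_iff.mpr ⟨hgw, -a, ?_⟩
  rw [hself, ha, ← map_neg]
  ring_nf

end Lattice

theorem isometry_identity_on_Wi_general
    {A : Type*} [CommRing A] [IsDomain A] [IsDiscreteValuationRing A]
    (hmax : IsLocalRing.maximalIdeal A = Ideal.span {2})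
    (δ : A) (hδunit : IsUnit δ)
    {B : Type*} [CommRing B] [IsDomain B] [Algebra A B]
    (π : B) (hπ : π ^ 2 = algebraMap A B (2 * δ))
    (σ : B ≃ₐ[A] B) (hσπ : σ π = -π)
    (hBfree : ∀ b : B, ∃! p : A × A, b = algebraMap A B p.1 + algebraMap A B p.2 * π)
    {L : Type*} [AddCommGroup L] [Module B L]
    (h : L → L → B)
    (hadd : ∀ x y z : L, h (x + y) z = h x z + h y z)
    (hsmul : ∀ (a b : B) (v w : L), h (a • v) (b • w) = σ a * b * h v w)
    (hsymm : ∀ v w : L, h w v = σ (h v w))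
    (i : ℕ) (hi : Even i)
    (g : L ≃ₗ[B] L) (hg : ∀ x y : L, h (g x) (g y) = h x y) :
    ∀ w ∈ WiSet π h i, g w - w ∈ XiSet π h i ∩ ZiSet A π h i := by
  obtain ⟨m, rfl⟩ := even_iff_two_dvd.mp hi
  have hh : IsHermitianForm σ h := ⟨hadd, hsmul, hsymm⟩
  have hb : IsBasisOneAnd A π := hBfree
  have h2prime : (Ideal.span {(2 : A)}).IsPrime :=
    hmax ▸ (IsLocalRing.maximalIdeal.isMaximal A).isPrime
  have hrad (d : B) : π ∣ d ^ 2 → π ∣ d := hb.dvd_of_dvd_sq h2prime hδunit hπ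
  have h2 : π ^ 2 ∣ 2 := by simpa only [map_ofNat] using sq_dvd_algebraMap hδunit hπ
  intro w hw
  rw [WiSet, if_pos hi] at hw
  induction hw using Submodule.span_induction with
  | mem x hx =>
    have hgx : g x - x ∈ XiSet π h (2 * m) := by
      rcases hx with hx | hx
      · exact sub_mem_XiSet hh (apply_mem_XiSet hg hx) hx
      · exact sub_mem_XiSet_of_mem_SiSet hh hσπ hb.ne_zero hrad h2 (apply_mem_SiSet hg hx) hx
    exact apply_sub_mem_XiSet_inter_ZiSet hh hb hσπ hπ hg (hx.elim (·.1) (·.1)) hgx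
  | zero => simpa using zero_mem_XiSet_inter_ZiSet hh
  | add x y _ _ hx hy =>
    simpa [add_sub_add_comm] using add_mem_XiSet_inter_ZiSet hh hb hσπ hπ hx hy
  | smul c x _ hx => simpa [smul_sub] using smul_mem_XiSet_inter_ZiSet hh hb hσπ hπ c hx

/-- for even `i = 2m`, every isometry `g` of `(L,h)` induces the identity on
`W_i/(X_i ∩ Z_i)`, i.e. `gw - w ∈ X_i ∩ Z_i` for every `w ∈ W_i`. -/
theorem isometry_identity_on_Wi
    {A : Type*} [CommRing A] [IsDomain A] [IsDiscreteValuationRing A] [CharZero A]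
    (hmax : IsLocalRing.maximalIdeal A = Ideal.span {2})
    [IsAdicComplete (IsLocalRing.maximalIdeal A) A]
    [CharP (IsLocalRing.ResidueField A) 2]
    [PerfectRing (IsLocalRing.ResidueField A) 2]
    (δ : A) (hδunit : IsUnit δ) (hδ1 : (2 : A) ∣ (δ - 1))
    {B : Type*} [CommRing B] [IsDomain B] [Algebra A B]
    (π : B) (hπ : π ^ 2 = algebraMap A B (2 * δ))
    (σ : B ≃ₐ[A] B) (hσπ : σ π = -π) (hσinv : ∀ b : B, σ (σ b) = b)
    (hBfree : ∀ b : B, ∃! p : A × A, b = algebraMap A B p.1 + algebraMap A B p.2 * π)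
    {L : Type*} [AddCommGroup L] [Module B L] [Module.Free B L] [Module.Finite B L]
    (h : L → L → B)
    (hadd : ∀ x y z : L, h (x + y) z = h x z + h y z)
    (hsmul : ∀ (a b : B) (v w : L), h (a • v) (b • w) = σ a * b * h v w)
    (hsymm : ∀ v w : L, h w v = σ (h v w))
    (hnd : ∀ v : L, (∀ w : L, h v w = 0) → v = 0)
    (i : ℕ) (hi : Even i)
    (g : L ≃ₗ[B] L) (hg : ∀ x y : L, h (g x) (g y) = h x y) :
    ∀ w ∈ WiSet π h i, g w - w ∈ XiSet π h i ∩ ZiSet A π h i :=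
  isometry_identity_on_Wi_general hmax δ hδunit π hπ σ hσπ hBfree h hadd hsmul hsymm i hi g hg
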